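/- arXiv:2310.11653 — 2 statements merged into one kernel-verified Lean document; each statement's English description precedes it below -/
import Mathlib

section
/- Let X and P be linear operators on a complex inner product space with [X,P] = iℏ·𝟙 (ℏ > 0), and let ρ be a state (density operator) with expectation ⟨A⟩ = Tr(Aρ). If |⟨g_l [X,P] g_r⟩| ≤ ε |⟨g_l XP g_r⟩| for the relevant monomials g_l, g_r, then for all integers 1 ≤ l ≤ J: |⟨X^{I₁}P^{J₁}⋯X^{I−1} P^l X P^{J−l}⟩| ≤ (1+ε)^l |⟨X^{I₁}P^{J₁}⋯X^{I}P^{J}⟩|. -/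
/-! Each time `x` is moved one step to the left past a `y`, the product `y * x` is rewritten as
`x * y - [x, y]`; the commutator term costs at most a factor `ε`, so `l` steps cost `(1 + ε) ^ l`. -/

/-- The monomial `X^{I₁} P^{J₁} ⋯ X^{I_n} P^{J_n}` determined by a list of exponent pairs. -/
def word {A : Type*} [Ring A] (X P : A) (L : List (ℕ × ℕ)) : A :=
  (L.map (fun e => X ^ e.1 * P ^ e.2)).prod

section MovingThroughPowers

variable {A F E : Type*} [Ring A] [SeminormedAddCommGroup E] [FunLike F A E]
  [AddMonoidHomClass F A E] (φ : F) {ε : ℝ}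

theorem norm_map_swap_le_of_commutator_le {x y a b : A}
    (h : ‖φ (a * (x * y - y * x) * b)‖ ≤ ε * ‖φ (a * (x * y) * b)‖) :
    ‖φ (a * (y * x) * b)‖ ≤ (1 + ε) * ‖φ (a * (x * y) * b)‖ := by
  have hsplit : a * (y * x) * b = a * (x * y) * b - a * (x * y - y * x) * b := by noncomm_ring
  calc ‖φ (a * (y * x) * b)‖
      ≤ ‖φ (a * (x * y) * b)‖ + ‖φ (a * (x * y - y * x) * b)‖ := by
        rw [hsplit, map_sub]
        exact norm_sub_le _ _
    _ ≤ (1 + ε) * ‖φ (a * (x * y) * b)‖ := by linarith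

theorem norm_map_mul_pow_mul_mul_pow_le (hε : 0 ≤ ε) {x y w : A}
    (hB : ∀ k m : ℕ, ‖φ (w * y ^ k * (x * y - y * x) * y ^ m)‖ ≤
      ε * ‖φ (w * y ^ k * (x * y) * y ^ m)‖) (l m : ℕ) :
    ‖φ (w * y ^ l * x * y ^ m)‖ ≤ (1 + ε) ^ l * ‖φ (w * x * y ^ (l + m))‖ := by
  induction l generalizing m with
  | zero => simp
  | succ l ih =>
    have hswap := norm_map_swap_le_of_commutator_le φ (hB l m)
    have hleft : w * y ^ (l + 1) * x * y ^ m = w * y ^ l * (y * x) * y ^ m := by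
      simp only [pow_succ, mul_assoc]
    have hright : w * y ^ l * (x * y) * y ^ m = w * y ^ l * x * y ^ (m + 1) := by
      simp only [pow_succ', mul_assoc]
    calc ‖φ (w * y ^ (l + 1) * x * y ^ m)‖
        ≤ (1 + ε) * ‖φ (w * y ^ l * x * y ^ (m + 1))‖ := by rwa [hleft, ← hright]
      _ ≤ (1 + ε) * ((1 + ε) ^ l * ‖φ (w * x * y ^ (l + (m + 1)))‖) := by
        gcongr
        exact ih (m + 1)
      _ = (1 + ε) ^ (l + 1) * ‖φ (w * x * y ^ (l + 1 + m))‖ := by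
        rw [Nat.add_right_comm, Nat.add_assoc, pow_succ]
        ring

end MovingThroughPowers

theorem word_append_singleton {A : Type*} [Ring A] (X P : A) (L : List (ℕ × ℕ)) (i j : ℕ) :
    word X P (L ++ [(i, j)]) = word X P L * (X ^ i * P ^ j) := by
  simp [word]

theorem word_singleton_zero {A : Type*} [Ring A] (X P : A) (j : ℕ) :
    word X P [(0, j)] = P ^ j := by
  simp [word]

theorem moved_X_through_powers_bound_general
    {A : Type*} [Ring A] [Algebra ℂ A]
    (X P : A)
    (φ : A →ₗ[ℂ] ℂ) (ε : ℝ) (hε : 0 < ε)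
    (hB : ∀ L₁ L₂ : List (ℕ × ℕ),
      ‖φ (word X P L₁ * (X * P - P * X) * word X P L₂)‖ ≤
        ε * ‖φ (word X P L₁ * (X * P) * word X P L₂)‖)
    (M : List (ℕ × ℕ)) (I J l : ℕ) (hI : 1 ≤ I) (hlJ : l ≤ J) :
    ‖φ (word X P M * (X ^ (I - 1) * P ^ l * X * P ^ (J - l)))‖ ≤
      (1 + ε) ^ l * ‖φ (word X P M * (X ^ I * P ^ J))‖ := by
  set w := word X P M * X ^ (I - 1)
  have hBw : ∀ k m : ℕ, ‖φ (w * P ^ k * (X * P - P * X) * P ^ m)‖ ≤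
      ε * ‖φ (w * P ^ k * (X * P) * P ^ m)‖ := fun k m => by
    simpa only [word_append_singleton, word_singleton_zero, w, mul_assoc]
      using hB (M ++ [(I - 1, k)]) [(0, m)]
  have hXI : X ^ I = X ^ (I - 1) * X := by rw [← pow_succ, Nat.sub_add_cancel hI]
  have hJ : J = l + (J - l) := (Nat.add_sub_cancel' hlJ).symm
  have key := norm_map_mul_pow_mul_mul_pow_le φ hε.le hBw l (J - l)
  rw [← hJ] at key
  simpa only [w, hXI, mul_assoc] using key

/-- Induction inequality (induc0) in Proposition 1: under the commutator bound (condition (B))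
for all monomials, one has
`|⟨M · X^{I-1} P^l X P^{J-l}⟩| ≤ (1+ε)^l |⟨M · X^I P^J⟩|` for `1 ≤ l ≤ J`. -/
theorem moved_X_through_powers_bound
    {A : Type*} [Ring A] [Algebra ℂ A]
    (X P : A) (ℏ : ℝ) (hℏ : 0 < ℏ)
    (hcomm : X * P - P * X = algebraMap ℂ A (Complex.I * ℏ))
    (φ : A →ₗ[ℂ] ℂ) (ε : ℝ) (hε : 0 < ε)
    (hB : ∀ L₁ L₂ : List (ℕ × ℕ),
      ‖φ (word X P L₁ * (X * P - P * X) * word X P L₂)‖ ≤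
        ε * ‖φ (word X P L₁ * (X * P) * word X P L₂)‖)
    (M : List (ℕ × ℕ)) (I J l : ℕ) (hI : 1 ≤ I) (hl1 : 1 ≤ l) (hlJ : l ≤ J) :
    ‖φ (word X P M * (X ^ (I - 1) * P ^ l * X * P ^ (J - l)))‖ ≤
      (1 + ε) ^ l * ‖φ (word X P M * (X ^ I * P ^ J))‖ :=
  moved_X_through_powers_bound_general X P φ ε hε hB M I J l hI hlJ
end

section
/- With g_{n,m} as above, the recursion g_{n,m}(q,p) = p^n q^m − n(iℏ/2) g_{n−1,m−1}(q,p) holds for all n, m ≥ 1. -/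
/-- The closed-form Weyl transform `g_{n,m}(q,p)` of `P^n X^m` (Eq. (g1)). -/
noncomputable def gW (ℏ q p : ℝ) (n m : ℕ) : ℂ :=
  ∑ j ∈ Finset.range (min n m + 1),
    (n.descFactorial j : ℂ) * (-(Complex.I * ℏ) / 2) ^ j *
      (p : ℂ) ^ (n - j) * (q : ℂ) ^ (m - j)

theorem gW_succ_succ (ℏ q p : ℝ) (n m : ℕ) :
    gW ℏ q p (n + 1) (m + 1) =
      (p : ℂ) ^ (n + 1) * (q : ℂ) ^ (m + 1) -
        ((n + 1 : ℕ) : ℂ) * (Complex.I * ℏ / 2) * gW ℏ q p n m := by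
  rw [gW, Nat.succ_min_succ, Finset.sum_range_succ', gW, Finset.mul_sum, sub_eq_neg_add,
    ← Finset.sum_neg_distrib]
  congr 1
  · refine Finset.sum_congr rfl fun j _ => ?_
    rw [Nat.succ_descFactorial_succ, Nat.add_sub_add_right, Nat.add_sub_add_right]
    push_cast
    ring
  · simp

theorem gW_recursion_general (ℏ q p : ℝ) (n m : ℕ) (hn : 1 ≤ n) (hm : 1 ≤ m) :
    gW ℏ q p n m =
      (p : ℂ) ^ n * (q : ℂ) ^ m - (n : ℂ) * (Complex.I * ℏ / 2) * gW ℏ q p (n - 1) (m - 1) := by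
  obtain ⟨n, rfl⟩ := Nat.exists_eq_add_of_le' hn
  obtain ⟨m, rfl⟩ := Nat.exists_eq_add_of_le' hm
  exact gW_succ_succ ℏ q p n m

/-- The recursion `g_{n,m} = p^n q^m − n (iℏ/2) g_{n−1,m−1}` for `n, m ≥ 1`. -/
theorem gW_recursion (ℏ q p : ℝ) (hℏ : 0 < ℏ) (n m : ℕ) (hn : 1 ≤ n) (hm : 1 ≤ m) :
    gW ℏ q p n m =
      (p : ℂ) ^ n * (q : ℂ) ^ m - (n : ℂ) * (Complex.I * ℏ / 2) * gW ℏ q p (n - 1) (m - 1) :=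
  gW_recursion_general ℏ q p n m hn hm
end
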